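/- arXiv:1810.05390 — 6 statements merged into one kernel-verified Lean document; each statement's English description precedes it below -/
import Mathlib

section
/- Let (X, μ1, μ2) be a generalized bitopological space and let i, j ∈ {1,2} with i ≠ j. If a set A ⊆ X is g_{μi}-closed with respect to μj, then cl_{μi}(A) ∖ A contains no nonempty μj-closed set; that is, every μj-closed set F with F ⊆ cl_{μi}(A) ∖ A is empty. -/
open Set

/-- A generalized topology on `X`: contains `∅` and is closed under arbitrary unions. -/
def IsGenTop {X : Type*} (μ : Set (Set X)) : Prop :=
  ∅ ∈ μ ∧ ∀ S ⊆ μ, ⋃₀ S ∈ μ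

/-- `A` is μ-closed iff its complement is μ-open. -/
def gClosedSet {X : Type*} (μ : Set (Set X)) (A : Set X) : Prop := Aᶜ ∈ μ

/-- μ-closure: intersection of all μ-closed sets containing `A`. -/
def gCl {X : Type*} (μ : Set (Set X)) (A : Set X) : Set X :=
  ⋂₀ {F | gClosedSet μ F ∧ A ⊆ F}

/-- `A^∧_μ`: intersection of all μ-open sets containing `A`. -/
def wedgeOp {X : Type*} (μ : Set (Set X)) (A : Set X) : Set X :=
  ⋂₀ {U | U ∈ μ ∧ A ⊆ U}

/-- `A^∨_μ`: union of all μ-closed sets contained in `A`. -/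
def veeOp {X : Type*} (μ : Set (Set X)) (A : Set X) : Set X :=
  ⋃₀ {F | gClosedSet μ F ∧ F ⊆ A}

/-- `L` is a `∧_μ`-set. -/
def IsWedgeSet {X : Type*} (μ : Set (Set X)) (L : Set X) : Prop := L = wedgeOp μ L

/-- `M` is a `∨_μ`-set. -/
def IsVeeSet {X : Type*} (μ : Set (Set X)) (M : Set X) : Prop := M = veeOp μ M

/-- `A` is `g_{μi}`-closed with respect to `μj`. -/
def GClosedWrt {X : Type*} (μi μj : Set (Set X)) (A : Set X) : Prop :=
  ∀ U ∈ μj, A ⊆ U → gCl μi A ⊆ U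

/-- `A` is `g_{μi}`-open with respect to `μj`. -/
def GOpenWrt {X : Type*} (μi μj : Set (Set X)) (A : Set X) : Prop :=
  GClosedWrt μi μj Aᶜ

/-- `A` is `λ_{μi}`-closed with respect to `μj`. -/
def LamClosedWrt {X : Type*} (μi μj : Set (Set X)) (A : Set X) : Prop :=
  ∃ F L : Set X, gClosedSet μi F ∧ IsWedgeSet μj L ∧ A = F ∩ L

/-- `A` is `λ_{μi}`-open with respect to `μj`. -/
def LamOpenWrt {X : Type*} (μi μj : Set (Set X)) (A : Set X) : Prop :=
  LamClosedWrt μi μj Aᶜ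

/-- `A` is pairwise `λ`-closed. -/
def PairwiseLamClosed {X : Type*} (μ1 μ2 : Set (Set X)) (A : Set X) : Prop :=
  ∃ F1 F2 L1 L2 : Set X, gClosedSet μ1 F1 ∧ gClosedSet μ2 F2 ∧
    IsWedgeSet μ1 L1 ∧ IsWedgeSet μ2 L2 ∧ A = (F1 ∩ F2) ∩ (L1 ∩ L2)

def PairwiseT0 {X : Type*} (μ1 μ2 : Set (Set X)) : Prop :=
  ∀ x y : X, x ≠ y →
    (∃ U ∈ μ1, x ∈ U ∧ y ∉ U) ∨ (∃ V ∈ μ2, y ∈ V ∧ x ∉ V)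

def PairwiseT1 {X : Type*} (μ1 μ2 : Set (Set X)) : Prop :=
  ∀ x y : X, x ≠ y →
    (∃ U ∈ μ1, x ∈ U ∧ y ∉ U) ∧ (∃ V ∈ μ2, y ∈ V ∧ x ∉ V)

def PairwiseSymmetric {X : Type*} (μ1 μ2 : Set (Set X)) : Prop :=
  ∀ x y : X, (x ∈ gCl μ1 {y} → y ∈ gCl μ2 {x}) ∧ (x ∈ gCl μ2 {y} → y ∈ gCl μ1 {x})

def PairwiseTHalf {X : Type*} (μ1 μ2 : Set (Set X)) : Prop :=
  (∀ A : Set X, GClosedWrt μ1 μ2 A → gClosedSet μ1 A) ∧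
  (∀ A : Set X, GClosedWrt μ2 μ1 A → gClosedSet μ2 A)

def PairwiseR0 {X : Type*} (μ1 μ2 : Set (Set X)) : Prop :=
  (∀ G ∈ μ1, ∀ x ∈ G, gCl μ2 {x} ⊆ G) ∧ (∀ G ∈ μ2, ∀ x ∈ G, gCl μ1 {x} ⊆ G)

def PairwiseLamSymmetric {X : Type*} (μ1 μ2 : Set (Set X)) : Prop :=
  ∀ A : Set X, PairwiseLamClosed μ1 μ2 A →
    LamClosedWrt μ1 μ2 A ∧ LamClosedWrt μ2 μ1 A

/-- `A` and `B` are μ-weakly separated. -/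
def MuWeaklySeparated {X : Type*} (μ : Set (Set X)) (A B : Set X) : Prop :=
  ∃ U ∈ μ, ∃ V ∈ μ, A ⊆ U ∧ B ⊆ V ∧ A ∩ V = ∅ ∧ B ∩ U = ∅

def PairwiseTQuarter {X : Type*} (μ1 μ2 : Set (Set X)) : Prop :=
  ∀ P : Set X, P.Finite → ∀ y ∉ P,
    ∃ A : Set X, P ⊆ A ∧ y ∉ A ∧
      (A ∈ μ1 ∨ A ∈ μ2 ∨ gClosedSet μ1 A ∨ gClosedSet μ2 A)

def PairwiseTThreeEighths {X : Type*} (μ1 μ2 : Set (Set X)) : Prop :=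
  ∀ P : Set X, P.Countable → ∀ y ∉ P,
    ∃ A : Set X, P ⊆ A ∧ y ∉ A ∧
      (A ∈ μ1 ∨ A ∈ μ2 ∨ gClosedSet μ1 A ∨ gClosedSet μ2 A)

def PairwiseTFiveEighths {X : Type*} (μ1 μ2 : Set (Set X)) : Prop :=
  ∀ P : Set X, ∀ y ∉ P,
    ∃ A : Set X, P ⊆ A ∧ y ∉ A ∧
      (A ∈ μ1 ∨ A ∈ μ2 ∨ gClosedSet μ1 A ∨ gClosedSet μ2 A)
theorem GClosedWrt.eq_empty_of_subset_diff {X : Type*} {μi μj : Set (Set X)} {A F : Set X}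
    (hA : GClosedWrt μi μj A) (hF : gClosedSet μj F) (hsub : F ⊆ gCl μi A \ A) : F = ∅ := by
  have hcl : gCl μi A ⊆ Fᶜ := hA Fᶜ hF fun _ hxA hxF => (hsub hxF).2 hxA
  exact eq_empty_of_forall_notMem fun x hx => hcl (hsub hx).1 hx

theorem stmt0_general {X : Type*} (μ : Fin 2 → Set (Set X))
    (i j : Fin 2) (A : Set X)
    (hA : GClosedWrt (μ i) (μ j) A) :
    ∀ F : Set X, gClosedSet (μ j) F → F ⊆ gCl (μ i) A \ A → F = ∅ :=
  fun _ hF hsub => hA.eq_empty_of_subset_diff hF hsub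

theorem stmt0 {X : Type*} (μ : Fin 2 → Set (Set X)) (hμ : ∀ k, IsGenTop (μ k))
    (i j : Fin 2) (hij : i ≠ j) (A : Set X)
    (hA : GClosedWrt (μ i) (μ j) A) :
    ∀ F : Set X, gClosedSet (μ j) F → F ⊆ gCl (μ i) A \ A → F = ∅ :=
  stmt0_general μ i j A hA
end

section
/- Let (X, μ1, μ2) be a generalized bitopological space and let i, j ∈ {1,2} with i ≠ j. Suppose that for every pair of μi-closed sets C and D, the union C ∪ D is g_{μi}-closed with respect to μj. Then for every pair of sets A and B that are g_{μi}-closed with respect to μj, the union A ∪ B is g_{μi}-closed with respect to μj. -/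
open Set

section GeneralizedClosure

variable {X : Type*} {μ : Set (Set X)}

theorem gClosedSet_gCl (hμ : IsGenTop μ) (A : Set X) : gClosedSet μ (gCl μ A) := by
  rw [gClosedSet, gCl, compl_sInter]
  exact hμ.2 _ (by rintro _ ⟨F, ⟨hF, -⟩, rfl⟩; exact hF)

theorem subset_gCl (A : Set X) : A ⊆ gCl μ A :=
  fun _ hx _ hF => hF.2 hx

theorem gCl_mono {A B : Set X} (hAB : A ⊆ B) : gCl μ A ⊆ gCl μ B :=
  fun _ hx F hF => hx F ⟨hF.1, hAB.trans hF.2⟩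

end GeneralizedClosure

theorem GClosedWrt.union_of_union_closed {X : Type*} {μi μj : Set (Set X)} (hμi : IsGenTop μi)
    (h : ∀ C D : Set X, gClosedSet μi C → gClosedSet μi D → GClosedWrt μi μj (C ∪ D))
    {A B : Set X} (hA : GClosedWrt μi μj A) (hB : GClosedWrt μi μj B) :
    GClosedWrt μi μj (A ∪ B) := by
  intro U hU hABU
  have hAU : gCl μi A ⊆ U := hA U hU (subset_union_left.trans hABU)
  have hBU : gCl μi B ⊆ U := hB U hU (subset_union_right.trans hABU)
  have hclU : gCl μi (gCl μi A ∪ gCl μi B) ⊆ U :=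
    h _ _ (gClosedSet_gCl hμi A) (gClosedSet_gCl hμi B) U hU (union_subset hAU hBU)
  exact (gCl_mono (union_subset_union (subset_gCl A) (subset_gCl B))).trans hclU

theorem stmt1_general {X : Type*} (μ : Fin 2 → Set (Set X)) (hμ : ∀ k, IsGenTop (μ k))
    (i j : Fin 2)
    (h : ∀ C D : Set X, gClosedSet (μ i) C → gClosedSet (μ i) D →
      GClosedWrt (μ i) (μ j) (C ∪ D)) :
    ∀ A B : Set X, GClosedWrt (μ i) (μ j) A → GClosedWrt (μ i) (μ j) B →
      GClosedWrt (μ i) (μ j) (A ∪ B) :=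
  fun _ _ hA hB => GClosedWrt.union_of_union_closed (hμ i) h hA hB

theorem stmt1 {X : Type*} (μ : Fin 2 → Set (Set X)) (hμ : ∀ k, IsGenTop (μ k))
    (i j : Fin 2) (hij : i ≠ j)
    (h : ∀ C D : Set X, gClosedSet (μ i) C → gClosedSet (μ i) D →
      GClosedWrt (μ i) (μ j) (C ∪ D)) :
    ∀ A B : Set X, GClosedWrt (μ i) (μ j) A → GClosedWrt (μ i) (μ j) B →
      GClosedWrt (μ i) (μ j) (A ∪ B) :=
  stmt1_general μ hμ i j h
end

section
/- Every generalized bitopological space (X, μ1, μ2) that is pairwise T0 and pairwise symmetric is pairwise T1. -/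
open Set

theorem notMem_gCl_singleton_iff {X : Type*} {μ : Set (Set X)} {x y : X} :
    x ∉ gCl μ {y} ↔ ∃ U ∈ μ, x ∈ U ∧ y ∉ U := by
  simp only [gCl, gClosedSet, mem_sInter, mem_ofPred_eq, singleton_subset_iff, not_forall]
  constructor
  · rintro ⟨F, ⟨hF, hyF⟩, hxF⟩
    exact ⟨Fᶜ, hF, hxF, not_not_intro hyF⟩
  · rintro ⟨U, hU, hxU, hyU⟩
    exact ⟨Uᶜ, ⟨by rwa [compl_compl], hyU⟩, not_not_intro hxU⟩

namespace PairwiseSymmetric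

variable {X : Type*} {μ1 μ2 : Set (Set X)} {x y : X}

theorem exists_open₂_of_exists_open₁ (hsym : PairwiseSymmetric μ1 μ2)
    (h : ∃ U ∈ μ1, x ∈ U ∧ y ∉ U) : ∃ V ∈ μ2, y ∈ V ∧ x ∉ V :=
  notMem_gCl_singleton_iff.1 fun hy => notMem_gCl_singleton_iff.2 h ((hsym y x).2 hy)

theorem exists_open₁_of_exists_open₂ (hsym : PairwiseSymmetric μ1 μ2)
    (h : ∃ V ∈ μ2, y ∈ V ∧ x ∉ V) : ∃ U ∈ μ1, x ∈ U ∧ y ∉ U :=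
  notMem_gCl_singleton_iff.1 fun hx => notMem_gCl_singleton_iff.2 h ((hsym x y).1 hx)

end PairwiseSymmetric

theorem stmt4_general {X : Type*} (μ1 μ2 : Set (Set X))
    (hT0 : PairwiseT0 μ1 μ2) (hsym : PairwiseSymmetric μ1 μ2) :
    PairwiseT1 μ1 μ2 := by
  intro x y hxy
  rcases hT0 x y hxy with h | h
  · exact ⟨h, hsym.exists_open₂_of_exists_open₁ h⟩
  · exact ⟨hsym.exists_open₁_of_exists_open₂ h, h⟩

theorem stmt4 {X : Type*} (μ1 μ2 : Set (Set X))
    (h1 : IsGenTop μ1) (h2 : IsGenTop μ2)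
    (hT0 : PairwiseT0 μ1 μ2) (hsym : PairwiseSymmetric μ1 μ2) :
    PairwiseT1 μ1 μ2 :=
  stmt4_general μ1 μ2 hT0 hsym
end

section
/- Let (X, μ1, μ2) be a generalized bitopological space and let i, j ∈ {1,2} with i ≠ j. If (A_k)_{k ∈ K} is any family of sets each of which is λ_{μi}-open with respect to μj, then the union ⋃_{k ∈ K} A_k is λ_{μi}-open with respect to μj. -/
open Set

theorem gClosedSet_iInter {X ι : Type*} {μ : Set (Set X)} (hμ : IsGenTop μ)
    {F : ι → Set X} (hF : ∀ k, gClosedSet μ (F k)) : gClosedSet μ (⋂ k, F k) := by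
  rw [gClosedSet, compl_iInter, ← sUnion_range]
  exact hμ.2 _ (range_subset_iff.2 hF)

theorem subset_wedgeOp {X : Type*} (μ : Set (Set X)) (A : Set X) : A ⊆ wedgeOp μ A :=
  subset_sInter fun _ hU => hU.2

theorem wedgeOp_mono {X : Type*} (μ : Set (Set X)) {A B : Set X} (hAB : A ⊆ B) :
    wedgeOp μ A ⊆ wedgeOp μ B :=
  sInter_subset_sInter fun _ hU => ⟨hU.1, hAB.trans hU.2⟩

theorem IsWedgeSet.iInter {X ι : Type*} {μ : Set (Set X)} {L : ι → Set X}
    (hL : ∀ k, IsWedgeSet μ (L k)) : IsWedgeSet μ (⋂ k, L k) :=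
  (subset_wedgeOp μ _).antisymm <| subset_iInter fun k =>
    (wedgeOp_mono μ (iInter_subset L k)).trans (hL k).symm.subset

theorem LamClosedWrt.iInter {X ι : Type*} {μi μj : Set (Set X)} (hμi : IsGenTop μi)
    {A : ι → Set X} (hA : ∀ k, LamClosedWrt μi μj (A k)) :
    LamClosedWrt μi μj (⋂ k, A k) := by
  choose F L hF hL hFL using hA
  refine ⟨⋂ k, F k, ⋂ k, L k, gClosedSet_iInter hμi hF, IsWedgeSet.iInter hL, ?_⟩
  simp only [hFL, iInter_inter_distrib]

theorem stmt8_general {X : Type*} (μ : Fin 2 → Set (Set X)) (hμ : ∀ k, IsGenTop (μ k))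
    (i j : Fin 2) {K : Type*} (A : K → Set X)
    (hA : ∀ k : K, LamOpenWrt (μ i) (μ j) (A k)) :
    LamOpenWrt (μ i) (μ j) (⋃ k : K, A k) := by
  rw [LamOpenWrt, compl_iUnion]
  exact LamClosedWrt.iInter (hμ i) hA

theorem stmt8 {X : Type*} (μ : Fin 2 → Set (Set X)) (hμ : ∀ k, IsGenTop (μ k))
    (i j : Fin 2) (hij : i ≠ j) {K : Type*} (A : K → Set X)
    (hA : ∀ k : K, LamOpenWrt (μ i) (μ j) (A k)) :
    LamOpenWrt (μ i) (μ j) (⋃ k : K, A k) :=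
  stmt8_general μ hμ i j A hA
end

section
/- If a generalized bitopological space (X, μ1, μ2) is pairwise T1, then every subset A of X is a ∧_{μ1μ2}-set, i.e. A = A^∧_{μ1} ∩ A^∧_{μ2}. -/
open Set

theorem wedgeOp_subset {X : Type*} {μ : Set (Set X)} {A U : Set X} (hU : U ∈ μ) (hAU : A ⊆ U) :
    wedgeOp μ A ⊆ U :=
  sInter_subset_of_mem ⟨hU, hAU⟩

theorem PairwiseT1.separates_left {X : Type*} {μ1 μ2 : Set (Set X)} (h : PairwiseT1 μ1 μ2)
    {x y : X} (hxy : x ≠ y) : ∃ U ∈ μ1, x ∈ U ∧ y ∉ U :=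
  (h x y hxy).1

theorem wedgeOp_eq_self {X : Type*} {μ : Set (Set X)} (hμ : ∀ S ⊆ μ, ⋃₀ S ∈ μ)
    (hsep : ∀ x y : X, x ≠ y → ∃ U ∈ μ, x ∈ U ∧ y ∉ U) (A : Set X) : wedgeOp μ A = A := by
  refine Subset.antisymm (fun x hx => ?_) (subset_wedgeOp μ A)
  by_contra hxA
  set S : Set (Set X) := {U | U ∈ μ ∧ x ∉ U}
  have hAS : A ⊆ ⋃₀ S := fun a ha => by
    obtain ⟨U, hUμ, haU, hxU⟩ := hsep a x (ne_of_mem_of_not_mem ha hxA)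
    exact ⟨U, ⟨hUμ, hxU⟩, haU⟩
  obtain ⟨U, ⟨_, hxU⟩, hxU'⟩ := wedgeOp_subset (hμ S fun _ hU => hU.1) hAS hx
  exact hxU hxU'

theorem stmt13_general {X : Type*} (μ1 μ2 : Set (Set X))
    (h1 : IsGenTop μ1)
    (hT1 : PairwiseT1 μ1 μ2) :
    ∀ A : Set X, A = wedgeOp μ1 A ∩ wedgeOp μ2 A := by
  intro A
  rw [wedgeOp_eq_self h1.2 (fun _ _ => hT1.separates_left) A]
  exact (inter_eq_left.mpr (subset_wedgeOp μ2 A)).symm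

theorem stmt13 {X : Type*} (μ1 μ2 : Set (Set X))
    (h1 : IsGenTop μ1) (h2 : IsGenTop μ2)
    (hT1 : PairwiseT1 μ1 μ2) :
    ∀ A : Set X, A = wedgeOp μ1 A ∩ wedgeOp μ2 A :=
  stmt13_general μ1 μ2 h1 hT1
end

section
/- Every generalized bitopological space (X, μ1, μ2) that is pairwise T0 and pairwise R0 is pairwise T1. -/
open Set

theorem mem_gCl_singleton_iff {X : Type*} {μ : Set (Set X)} {x y : X} :
    y ∈ gCl μ {x} ↔ ∀ U ∈ μ, y ∈ U → x ∈ U := by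
  simp only [gCl, gClosedSet, mem_sInter, mem_ofPred_eq, singleton_subset_iff]
  refine ⟨fun h U hU hyU => ?_, fun h F ⟨hF, hxF⟩ => ?_⟩
  · by_contra hxU
    exact h Uᶜ ⟨by rwa [compl_compl], hxU⟩ hyU
  · by_contra hyF
    exact h Fᶜ hF hyF hxF

theorem exists_open_mem_not_mem_of_R0 {X : Type*} {μ ν : Set (Set X)}
    (hR0 : ∀ G ∈ μ, ∀ x ∈ G, gCl ν {x} ⊆ G) {U : Set X} {x y : X}
    (hU : U ∈ μ) (hxU : x ∈ U) (hyU : y ∉ U) :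
    ∃ V ∈ ν, y ∈ V ∧ x ∉ V := by
  have hy : y ∉ gCl ν {x} := fun hy => hyU (hR0 U hU x hxU hy)
  simpa [mem_gCl_singleton_iff] using hy

theorem stmt19_general {X : Type*} (μ1 μ2 : Set (Set X))
    (hT0 : PairwiseT0 μ1 μ2) (hR0 : PairwiseR0 μ1 μ2) :
    PairwiseT1 μ1 μ2 := by
  intro x y hxy
  rcases hT0 x y hxy with ⟨U, hU, hxU, hyU⟩ | ⟨V, hV, hyV, hxV⟩
  · exact ⟨⟨U, hU, hxU, hyU⟩, exists_open_mem_not_mem_of_R0 hR0.1 hU hxU hyU⟩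
  · exact ⟨exists_open_mem_not_mem_of_R0 hR0.2 hV hyV hxV, ⟨V, hV, hyV, hxV⟩⟩

theorem stmt19 {X : Type*} (μ1 μ2 : Set (Set X))
    (h1 : IsGenTop μ1) (h2 : IsGenTop μ2)
    (hT0 : PairwiseT0 μ1 μ2) (hR0 : PairwiseR0 μ1 μ2) :
    PairwiseT1 μ1 μ2 :=
  stmt19_general μ1 μ2 hT0 hR0
end
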